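/- Let S and 𝒜 be finite types, μ : S → ℝ and π : S → 𝒜 → ℝ nonnegative with Σ_s μ(s) = 1 and Σ_a π(s,a) = 1 for every s, and let f : S → ℝ^{d₁} satisfy ‖f(s)‖ ≤ 1. Let d : S × 𝒜 → ℝ, let h_1, …, h_N : S × 𝒜 → ℝ with |h_k(s,a)| ≤ U_c, and let α ∈ ℝ^N with |α_k| ≤ U_α. For γ ∈ ℝ^N set C(s,a,γ) = d(s,a) + Σ_{k=1}^N γ_k (h_k(s,a) − α_k), L(γ) = Σ_{s,a} μ(s)π(s,a) C(s,a,γ), and b(γ) = Σ_{s,a} μ(s)π(s,a)(C(s,a,γ) − L(γ)) f(s) ∈ ℝ^{d₁}. Let A be an invertible d₁ × d₁ matrix with ‖A⁻¹‖ ≤ λ_e^{-1} (λ_e > 0), and for each γ let v*(γ) be the unique solution of A v*(γ) + b(γ) = 0. Then for all γ¹, γ² ∈ ℝ^N with 0 ≤ γ^i_k ≤ M, one has ‖v*(γ¹) − v*(γ²)‖ ≤ (2N(U_c + U_α)/λ_e) · max_{k=1,…,N} |γ¹_k − γ²_k|. -/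

import Mathlib

/-!
`v*(γ) = -A⁻¹ b(γ)`, so it suffices to show that `b` is Lipschitz. The cost `C(s,a,·)` is
affine in `γ` with slope bounded by `U_c + U_α` in each of the `N` coordinates, so every cost
moves by at most `N (U_c + U_α) ‖γ¹ - γ²‖_∞`; averaging against `μ π` moves the mean `L` by at
most as much, hence each centered cost `C - L` moves by at most twice that, and so does their
`μ π`-average `b` of the unit vectors `f(s)`.
-/

open Finset

theorem norm_sum_smul_le_of_norm_le {ι E : Type*} [SeminormedAddCommGroup E] [NormedSpace ℝ E]
    {s : Finset ι} {w : ι → ℝ} {g : ι → E} {K : ℝ} (hw0 : ∀ i ∈ s, 0 ≤ w i)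
    (hw1 : ∑ i ∈ s, w i = 1) (hg : ∀ i ∈ s, ‖g i‖ ≤ K) : ‖∑ i ∈ s, w i • g i‖ ≤ K := by
  simpa using (convex_closedBall (0 : E) K).sum_mem hw0 hw1 (by simpa using hg)

theorem abs_sum_mul_sub_sum_mul_le {ι : Type*} [Fintype ι] (x y c : ι → ℝ) {U : ℝ}
    (hc : ∀ k, |c k| ≤ U) :
    |∑ k, x k * c k - ∑ k, y k * c k| ≤ Fintype.card ι * U * ⨆ k, |x k - y k| := by
  have hD : ∀ k, |x k - y k| ≤ ⨆ k, |x k - y k| :=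
    le_ciSup (Set.finite_range fun k => |x k - y k|).bddAbove
  have hD0 : 0 ≤ ⨆ k, |x k - y k| := Real.iSup_nonneg fun _ => abs_nonneg _
  calc |∑ k, x k * c k - ∑ k, y k * c k| = |∑ k, (x k - y k) * c k| := by
        simp only [← sum_sub_distrib, sub_mul]
    _ ≤ ∑ k, |x k - y k| * |c k| := by
        simpa only [abs_mul] using abs_sum_le_sum_abs (fun k => (x k - y k) * c k) univ
    _ ≤ ∑ _k : ι, (⨆ k, |x k - y k|) * U :=
        sum_le_sum fun k _ => mul_le_mul (hD k) (hc k) (abs_nonneg _) hD0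
    _ = Fintype.card ι * U * ⨆ k, |x k - y k| := by
        simp only [sum_const, card_univ, nsmul_eq_mul]; ring

theorem norm_centered_sum_sub_le {ι E : Type*} [Fintype ι] [SeminormedAddCommGroup E]
    [NormedSpace ℝ E] {w c₁ c₂ : ι → ℝ} {f : ι → E} {K : ℝ} (hw0 : ∀ i, 0 ≤ w i)
    (hw1 : ∑ i, w i = 1) (hf : ∀ i, ‖f i‖ ≤ 1) (hc : ∀ i, |c₁ i - c₂ i| ≤ K) :
    ‖∑ i, (w i * (c₁ i - ∑ j, w j * c₁ j)) • f i - ∑ i, (w i * (c₂ i - ∑ j, w j * c₂ j)) • f i‖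
      ≤ 2 * K := by
  have hmean : |∑ j, w j * c₁ j - ∑ j, w j * c₂ j| ≤ K := by
    simpa [← sum_sub_distrib, mul_sub] using
      norm_sum_smul_le_of_norm_le (fun i _ => hw0 i) hw1 (g := fun i => c₁ i - c₂ i)
        (fun i _ => hc i)
  rw [← sum_sub_distrib]
  simp_rw [← sub_smul, ← mul_sub, mul_smul]
  refine norm_sum_smul_le_of_norm_le (fun i _ => hw0 i) hw1 fun i _ => ?_
  calc ‖((c₁ i - ∑ j, w j * c₁ j) - (c₂ i - ∑ j, w j * c₂ j)) • f i‖
      ≤ |(c₁ i - c₂ i) - (∑ j, w j * c₁ j - ∑ j, w j * c₂ j)| * 1 := by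
        rw [norm_smul, Real.norm_eq_abs, sub_sub_sub_comm]
        exact mul_le_mul_of_nonneg_left (hf i) (abs_nonneg _)
    _ ≤ K + K := by rw [mul_one]; exact (abs_sub _ _).trans (add_le_add (hc i) hmean)
    _ = 2 * K := by ring

theorem norm_sub_le_opNorm_mul_of_comp_eq_one {E F : Type*} [SeminormedAddCommGroup E]
    [NormedSpace ℝ E] [SeminormedAddCommGroup F] [NormedSpace ℝ F] {A : E →L[ℝ] F}
    {B : F →L[ℝ] E} (hBA : B ∘L A = 1) {v₁ v₂ : E} {b₁ b₂ : F} (h₁ : A v₁ + b₁ = 0)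
    (h₂ : A v₂ + b₂ = 0) : ‖v₁ - v₂‖ ≤ ‖B‖ * ‖b₁ - b₂‖ := by
  have hsolve : ∀ {v b}, A v + b = 0 → v = -B b := fun {v b} h => by
    have hBAv : B (A v) = v := by simpa using congrArg (· v) hBA
    rw [← hBAv, eq_neg_iff_add_eq_zero.mpr h, map_neg]
  rw [hsolve h₁, hsolve h₂, neg_sub_neg, ← map_sub, norm_sub_rev b₁]
  exact B.le_opNorm _

theorem sum_prod_mul_eq_one {S 𝒜 : Type*} [Fintype S] [Fintype 𝒜] {μ : S → ℝ} {π : S → 𝒜 → ℝ}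
    (hμ1 : ∑ s, μ s = 1) (hπ1 : ∀ s, ∑ a, π s a = 1) :
    ∑ x : S × 𝒜, μ x.1 * π x.1 x.2 = 1 := by
  simp [Fintype.sum_prod_type, ← mul_sum, hπ1, hμ1]
theorem stmt_4_general (S 𝒜 : Type*) [Fintype S] [Fintype 𝒜] (d₁ N : ℕ)
    (μ : S → ℝ) (π : S → 𝒜 → ℝ)
    (hμ0 : ∀ s, 0 ≤ μ s) (hπ0 : ∀ s a, 0 ≤ π s a)
    (hμ1 : ∑ s, μ s = 1) (hπ1 : ∀ s, ∑ a, π s a = 1)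
    (f : S → EuclideanSpace ℝ (Fin d₁)) (hf : ∀ s, ‖f s‖ ≤ 1)
    (dc : S → 𝒜 → ℝ) (h : Fin N → S → 𝒜 → ℝ) (α : Fin N → ℝ)
    (Uc Uα lam_e M : ℝ)
    (hh : ∀ k s a, |h k s a| ≤ Uc) (hα : ∀ k, |α k| ≤ Uα)
    (A B : EuclideanSpace ℝ (Fin d₁) →L[ℝ] EuclideanSpace ℝ (Fin d₁))
    (hBA : B ∘L A = 1) (hBnorm : ‖B‖ ≤ lam_e⁻¹)
    (C : S → 𝒜 → (Fin N → ℝ) → ℝ)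
    (hC : ∀ s a γ, C s a γ = dc s a + ∑ k, γ k * (h k s a - α k))
    (L : (Fin N → ℝ) → ℝ)
    (hL : ∀ γ, L γ = ∑ s, ∑ a, μ s * π s a * C s a γ)
    (bvec : (Fin N → ℝ) → EuclideanSpace ℝ (Fin d₁))
    (hb : ∀ γ, bvec γ = ∑ s, ∑ a, (μ s * π s a * (C s a γ - L γ)) • f s)
    (vstar : (Fin N → ℝ) → EuclideanSpace ℝ (Fin d₁))
    (hv : ∀ γ, A (vstar γ) + bvec γ = 0) :
    ∀ γ₁ γ₂ : Fin N → ℝ,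
      (∀ k, 0 ≤ γ₁ k ∧ γ₁ k ≤ M) → (∀ k, 0 ≤ γ₂ k ∧ γ₂ k ≤ M) →
      ‖vstar γ₁ - vstar γ₂‖ ≤ (2 * N * (Uc + Uα) / lam_e) * ⨆ k, |γ₁ k - γ₂ k| := by
  intro γ₁ γ₂ _ _
  set K := N * (Uc + Uα) * ⨆ k, |γ₁ k - γ₂ k|
  have hCK : ∀ x : S × 𝒜, |C x.1 x.2 γ₁ - C x.1 x.2 γ₂| ≤ K := fun ⟨s, a⟩ => by
    simpa [hC] using abs_sum_mul_sub_sum_mul_le γ₁ γ₂ (fun k => h k s a - α k)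
      fun k => (abs_sub _ _).trans (add_le_add (hh k s a) (hα k))
  have hbw : ∀ γ, bvec γ = ∑ x : S × 𝒜, (μ x.1 * π x.1 x.2 *
      (C x.1 x.2 γ - ∑ y : S × 𝒜, μ y.1 * π y.1 y.2 * C y.1 y.2 γ)) • f x.1 := fun γ => by
    simp only [hb, hL, Fintype.sum_prod_type]
  have hbK : ‖bvec γ₁ - bvec γ₂‖ ≤ 2 * K := by
    rw [hbw, hbw]
    exact norm_centered_sum_sub_le (fun x => mul_nonneg (hμ0 x.1) (hπ0 x.1 x.2))
      (sum_prod_mul_eq_one hμ1 hπ1) (fun x => hf x.1) hCK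
  calc ‖vstar γ₁ - vstar γ₂‖ ≤ ‖B‖ * ‖bvec γ₁ - bvec γ₂‖ :=
        norm_sub_le_opNorm_mul_of_comp_eq_one hBA (hv γ₁) (hv γ₂)
    _ ≤ lam_e⁻¹ * (2 * K) := mul_le_mul hBnorm hbK (norm_nonneg _) ((norm_nonneg B).trans hBnorm)
    _ = (2 * N * (Uc + Uα) / lam_e) * ⨆ k, |γ₁ k - γ₂ k| := by ring

/-- Proposition 2 of the paper: Lipschitz continuity in the Lagrange multiplier `γ` of
the TD(0) critic fixed point `v*(γ)` solving `A v*(γ) + b(γ) = 0`, where the stationary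
state-action distribution has weights `μ(s)π(s,a)` and the single-stage Lagrangian cost
`C` is affine in `γ`. -/
theorem stmt_4 (S 𝒜 : Type*) [Fintype S] [Fintype 𝒜] (d₁ N : ℕ)
    (μ : S → ℝ) (π : S → 𝒜 → ℝ)
    (hμ0 : ∀ s, 0 ≤ μ s) (hπ0 : ∀ s a, 0 ≤ π s a)
    (hμ1 : ∑ s, μ s = 1) (hπ1 : ∀ s, ∑ a, π s a = 1)
    (f : S → EuclideanSpace ℝ (Fin d₁)) (hf : ∀ s, ‖f s‖ ≤ 1)
    (dc : S → 𝒜 → ℝ) (h : Fin N → S → 𝒜 → ℝ) (α : Fin N → ℝ)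
    (Uc Uα lam_e M : ℝ)
    (hh : ∀ k s a, |h k s a| ≤ Uc) (hα : ∀ k, |α k| ≤ Uα)
    (hlam : 0 < lam_e) (hM : 0 < M)
    (A B : EuclideanSpace ℝ (Fin d₁) →L[ℝ] EuclideanSpace ℝ (Fin d₁))
    (hAB : A ∘L B = 1) (hBA : B ∘L A = 1) (hBnorm : ‖B‖ ≤ lam_e⁻¹)
    (C : S → 𝒜 → (Fin N → ℝ) → ℝ)
    (hC : ∀ s a γ, C s a γ = dc s a + ∑ k, γ k * (h k s a - α k))
    (L : (Fin N → ℝ) → ℝ)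
    (hL : ∀ γ, L γ = ∑ s, ∑ a, μ s * π s a * C s a γ)
    (bvec : (Fin N → ℝ) → EuclideanSpace ℝ (Fin d₁))
    (hb : ∀ γ, bvec γ = ∑ s, ∑ a, (μ s * π s a * (C s a γ - L γ)) • f s)
    (vstar : (Fin N → ℝ) → EuclideanSpace ℝ (Fin d₁))
    (hv : ∀ γ, A (vstar γ) + bvec γ = 0) :
    ∀ γ₁ γ₂ : Fin N → ℝ,
      (∀ k, 0 ≤ γ₁ k ∧ γ₁ k ≤ M) → (∀ k, 0 ≤ γ₂ k ∧ γ₂ k ≤ M) →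
      ‖vstar γ₁ - vstar γ₂‖ ≤ (2 * N * (Uc + Uα) / lam_e) * ⨆ k, |γ₁ k - γ₂ k| :=
  stmt_4_general S 𝒜 d₁ N μ π hμ0 hπ0 hμ1 hπ1 f hf dc h α Uc Uα lam_e M hh hα A B hBA hBnorm C hC L
    hL bvec hb vstar hv
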